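/- arXiv:cs/0111038 — 2 statements merged into one kernel-verified Lean document; each statement's English description precedes it below -/
import Mathlib

section
/- In a fair valuation structure, for all valuations α and β, ((α ⊕ β) ⊖ α) ⊖ β = (α ⊕ β) ⊖ (α ⊕ β). -/
structure FairVS (E : Type*) [LinearOrder E] where
  op : E → E → E
  bot : E
  top : E
  bot_le : ∀ a : E, bot ≤ a
  le_top : ∀ a : E, a ≤ top
  comm : ∀ a b : E, op a b = op b a
  assoc : ∀ a b c : E, op (op a b) c = op a (op b c)
  iden : ∀ a : E, op a bot = a
  mono : ∀ a b c : E, b ≤ a → op b c ≤ op a c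
  absorb : ∀ a : E, op a top = top
  sub : E → E → E
  sub_add : ∀ a b : E, a ≤ b → op (sub b a) a = b
  sub_max : ∀ a b g : E, a ≤ b → op g a = b → g ≤ sub b a

/-! Write `b = a ⊕ c` and `e = (b ⊖ a) ⊖ c`. Then `e ⊕ b = b`, so `e ≤ b ⊖ b` by maximality.
Conversely `b ⊖ b` is neutral on `b ⊖ a` (adding `a` to either side gives `b`, and maximality
bounds the larger one), hence `((b ⊖ b) ⊕ e) ⊕ c = b ⊖ a` and maximality gives
`b ⊖ b ≤ (b ⊖ b) ⊕ e ≤ e`. -/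

namespace FairVS

variable {E : Type*} [LinearOrder E] (S : FairVS E)

theorem le_op_left (a b : E) : a ≤ S.op a b := by
  simpa only [S.comm S.bot, S.iden, S.comm a b] using S.mono b S.bot a (S.bot_le b)

theorem le_op_right (a b : E) : b ≤ S.op a b :=
  S.comm b a ▸ S.le_op_left b a

theorem le_of_op_eq {a c b : E} (h : S.op a c = b) : a ≤ b :=
  h ▸ S.le_op_left a c

theorem le_sub_of_op_eq {a c b : E} (h : S.op a c = b) : c ≤ S.sub b a :=
  S.sub_max a b c (S.le_of_op_eq h) (S.comm c a ▸ h)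

theorem sub_self_op_sub {a b : E} (hab : a ≤ b) :
    S.op (S.sub b b) (S.sub b a) = S.sub b a := by
  refine le_antisymm (S.sub_max a b _ hab ?_) (S.le_op_right _ _)
  rw [S.assoc, S.sub_add a b hab, S.sub_add b b le_rfl]

variable {a c b : E} (h : S.op a c = b)
include h

theorem sub_sub_le_sub_self : S.sub (S.sub b a) c ≤ S.sub b b := by
  have hab := S.le_of_op_eq h
  have hcd := S.le_sub_of_op_eq h
  have hb : S.op (S.op (S.sub (S.sub b a) c) c) a = b := by
    rw [S.sub_add c _ hcd, S.sub_add a b hab]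
  rw [S.assoc, S.comm c a, h] at hb
  exact S.sub_max b b _ le_rfl hb

theorem sub_self_le_sub_sub : S.sub b b ≤ S.sub (S.sub b a) c := by
  have hab := S.le_of_op_eq h
  have hcd := S.le_sub_of_op_eq h
  refine (S.le_op_left _ (S.sub (S.sub b a) c)).trans (S.sub_max c _ _ hcd ?_)
  rw [S.assoc, S.sub_add c _ hcd, S.sub_self_op_sub hab]

theorem sub_sub_eq_sub_self : S.sub (S.sub b a) c = S.sub b b :=
  le_antisymm (S.sub_sub_le_sub_self h) (S.sub_self_le_sub_sub h)

end FairVS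

theorem stmt7 {E : Type*} [LinearOrder E] (S : FairVS E) (α β : E) :
    S.sub (S.sub (S.op α β) α) β = S.sub (S.op α β) (S.op α β) :=
  S.sub_sub_eq_sub_self rfl
end

section
/- A directional arc consistent fair binary VCSP V is (2, f_min)-irreducible: for any two variables i < j and any equivalence-preserving replacement of the constraints c_i, c_j, c_{ij} by c'_i, c'_j, c'_{ij} (i.e., one preserving c_i(a) ⊕ c_{ij}(a,b) ⊕ c_j(b) = c'_i(a) ⊕ c'_{ij}(a,b) ⊕ c'_j(b) for all a ∈ d_i, b ∈ d_j), the lower bound f_min does not increase: f_min over the new constraints on {i,j} combined is at most f_min over the original. -/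
/-!
Let `a₀` minimise `c_i`. Directional arc consistency gives a `b₀` with
`c_i(a₀) = c_i(a₀) ⊕ c_{ij}(a₀,b₀) ⊕ c_j(b₀)`, the cost of the assignment `(a₀, b₀)`.
Equivalence preservation makes this also its cost under the new constraints, which is at least the new
`f_min` contribution; on the other hand `c_i(a₀) = min c_i` is at most the old one.
-/

namespace FairVS

variable {E : Type*} [LinearOrder E] (S : FairVS E)

theorem le_op (a c : E) : a ≤ S.op a c := by
  simpa only [S.comm S.bot, S.iden, S.comm c] using S.mono c S.bot a (S.bot_le c)

theorem op_le_op {a b c d : E} (hab : a ≤ b) (hcd : c ≤ d) : S.op a c ≤ S.op b d :=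
  calc S.op a c ≤ S.op b c := S.mono b a c hab
    _ = S.op c b := S.comm b c
    _ ≤ S.op d b := S.mono d c b hcd
    _ = S.op b d := S.comm d b

theorem op_right_comm (a b c : E) : S.op (S.op a b) c = S.op (S.op a c) b := by
  rw [S.assoc, S.assoc, S.comm b]

section Pair

variable {A B : Type*} (ci : A → E) (cj : B → E) (cij : A × B → E)

def pairCost (a : A) (b : B) : E :=
  S.op (S.op (ci a) (cij (a, b))) (cj b)

theorem exists_pairCost_eq_inf' [Fintype A] [Nonempty A]
    (hdac : ∀ a : A, IsLeast { v : E | ∃ b : B, v = S.pairCost ci cj cij a b } (ci a)) :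
    ∃ a b, S.pairCost ci cj cij a b = Finset.univ.inf' Finset.univ_nonempty ci := by
  obtain ⟨a, -, ha⟩ := Finset.exists_mem_eq_inf' Finset.univ_nonempty ci
  obtain ⟨b, hb⟩ := (hdac a).1
  exact ⟨a, b, ha ▸ hb.symm⟩

variable [Fintype A] [Fintype B] [Nonempty A] [Nonempty B]

def pairLowerBound : E :=
  S.op (S.op (Finset.univ.inf' Finset.univ_nonempty ci)
      (Finset.univ.inf' Finset.univ_nonempty cj))
    (Finset.univ.inf' Finset.univ_nonempty cij)

theorem pairLowerBound_le_pairCost (a : A) (b : B) :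
    S.pairLowerBound ci cj cij ≤ S.pairCost ci cj cij a b := by
  rw [pairCost, op_right_comm]
  exact S.op_le_op (S.op_le_op (Finset.inf'_le _ (Finset.mem_univ a))
    (Finset.inf'_le _ (Finset.mem_univ b))) (Finset.inf'_le _ (Finset.mem_univ (a, b)))

theorem inf'_le_pairLowerBound :
    Finset.univ.inf' Finset.univ_nonempty ci ≤ S.pairLowerBound ci cj cij :=
  (S.le_op _ _).trans (S.op_le_op (S.le_op _ _) le_rfl)

end Pair

end FairVS

/-- A directional arc consistent fair binary VCSP is (2, f_min)-irreducible:
any equivalence-preserving replacement of the constraints on a pair {i,j}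
cannot increase the contribution of that pair to the lower bound f_min. -/
theorem stmt18 {E : Type*} [LinearOrder E] (S : FairVS E)
    {A B : Type*} [Fintype A] [Fintype B] [Nonempty A] [Nonempty B]
    (ci : A → E) (cj : B → E) (cij : A × B → E)
    (ci' : A → E) (cj' : B → E) (cij' : A × B → E)
    (hequiv : ∀ a b, S.op (S.op (ci a) (cij (a, b))) (cj b) =
      S.op (S.op (ci' a) (cij' (a, b))) (cj' b))
    (hdac : ∀ a : A,
      IsLeast { v : E | ∃ b : B, v = S.op (S.op (ci a) (cij (a, b))) (cj b) }
        (ci a)) :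
    S.op (S.op (Finset.univ.inf' Finset.univ_nonempty ci')
        (Finset.univ.inf' Finset.univ_nonempty cj'))
      (Finset.univ.inf' Finset.univ_nonempty cij') ≤
    S.op (S.op (Finset.univ.inf' Finset.univ_nonempty ci)
        (Finset.univ.inf' Finset.univ_nonempty cj))
      (Finset.univ.inf' Finset.univ_nonempty cij) := by
  obtain ⟨a, b, hab⟩ := S.exists_pairCost_eq_inf' ci cj cij hdac
  calc S.pairLowerBound ci' cj' cij'
      ≤ S.pairCost ci' cj' cij' a b := S.pairLowerBound_le_pairCost ci' cj' cij' a b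
    _ = S.pairCost ci cj cij a b := (hequiv a b).symm
    _ = Finset.univ.inf' Finset.univ_nonempty ci := hab
    _ ≤ S.pairLowerBound ci cj cij := S.inf'_le_pairLowerBound ci cj cij
end
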